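/- Fix an integer m ≥ 1, set N := 2m+1, and let W be an admissible subspace of (ℝ×ℝ)^N, i.e. a real N-dimensional linear subspace on which Im_τ q vanishes identically and Re_τ q is negative definite. Then the stabilizer {M ∈ SU(N, ℝ_τ, Q) : M(W) = W} is isomorphic as a group to the special orthogonal group SO(N) = {A ∈ Mat_N(ℝ) : AᵗA = I and det A = 1}. -/

import Mathlib

open Matrix

/-- The `n × n` real antidiagonal matrix with all antidiagonal entries equal to `1`. -/
noncomputable def Qmat (n : ℕ) : Matrix (Fin n) (Fin n) ℝ :=
  Matrix.of fun i j => if (i : ℕ) + (j : ℕ) + 1 = n then (1 : ℝ) else 0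

/-- The para-Hermitian form `q(z, z') = (vᵗQw') e₊ + (wᵗQv') e₋` on `ℝ_τⁿ`, where the
para-complex numbers are modeled by `ℝ × ℝ` (so `z i = (v i, w i)`). -/
noncomputable def paraq (n : ℕ) (z z' : Fin n → ℝ × ℝ) : ℝ × ℝ :=
  ((fun i => (z i).1) ⬝ᵥ (Qmat n).mulVec (fun i => (z' i).2),
   (fun i => (z i).2) ⬝ᵥ (Qmat n).mulVec (fun i => (z' i).1))

/-- The real part `Re_τ q` of the para-Hermitian form. -/
noncomputable def Retau (n : ℕ) (z z' : Fin n → ℝ × ℝ) : ℝ :=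
  ((paraq n z z').1 + (paraq n z z').2) / 2

/-- The τ-imaginary part `Im_τ q` of the para-Hermitian form. -/
noncomputable def Imtau (n : ℕ) (z z' : Fin n → ℝ × ℝ) : ℝ :=
  ((paraq n z z').1 - (paraq n z z').2) / 2

/-- A real `N`-dimensional subspace of `ℝ_τ^N ≅ (ℝ×ℝ)^N` is admissible if it is
Lagrangian for `Im_τ q` and `Re_τ q` is negative definite on it. -/
def IsAdmissible (N : ℕ) (W : Submodule ℝ (Fin N → ℝ × ℝ)) : Prop :=
  Module.finrank ℝ ↥W = N ∧
  (∀ z ∈ W, ∀ z' ∈ W, Imtau N z z' = 0) ∧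
  (∀ z ∈ W, z ≠ 0 → Retau N z z < 0)

/-! An admissible `W` meets `0 × ℝᴺ` trivially, since `Re_τ q` vanishes there; by dimension it
is the graph `{(v, T v)}` of a matrix `T`, and the two conditions on `q` say that `S = -Q T` is
positive definite. Writing `M = (P₁, P₂)`, `M` preserves `q` iff `P₁ᵀ Q P₂ = Q`, and `M` maps
the graph onto itself iff `P₂ T = T P₁`. Together these say `P₁ᵀ S P₁ = S` and
`P₂ = (Q S) P₁ (Q S)⁻¹`, so `P ↦ (P, (Q S) P (Q S)⁻¹)` maps the special orthogonal group of
`S` onto the stabilizer, and conjugation by `B` with `S = Bᵀ B` identifies that group with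
`SO(N)`. -/

namespace Matrix

variable {ι R : Type*} [Fintype ι] [CommRing R]

theorem ext_of_dotProduct_mulVec [DecidableEq ι] {A B : Matrix ι ι R}
    (h : ∀ v w, v ⬝ᵥ A *ᵥ w = v ⬝ᵥ B *ᵥ w) : A = B :=
  (toLinearMap₂' R).injective <| LinearMap.ext₂ fun v w => by
    rw [toLinearMap₂'_apply', toLinearMap₂'_apply', h]

theorem transpose_eq_of_dotProduct_mulVec_comm [DecidableEq ι] {A : Matrix ι ι R}
    (h : ∀ v w, v ⬝ᵥ A *ᵥ w = w ⬝ᵥ A *ᵥ v) : Aᵀ = A :=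
  ext_of_dotProduct_mulVec fun v w => by
    rw [h, dotProduct_mulVec, vecMul_transpose, dotProduct_comm]

theorem mulVec_dotProduct_mulVec (A B : Matrix ι ι R) (v w : ι → R) :
    (A *ᵥ v) ⬝ᵥ (B *ᵥ w) = v ⬝ᵥ (Aᵀ * B) *ᵥ w := by
  rw [← vecMul_transpose, ← dotProduct_mulVec, mulVec_mulVec]

section Prod

variable {S : Type*} [CommRing S]

def prodRingEquiv : Matrix ι ι (R × S) ≃+* Matrix ι ι R × Matrix ι ι S where
  toFun M := (M.map Prod.fst, M.map Prod.snd)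
  invFun P := of fun i j => (P.1 i j, P.2 i j)
  left_inv _ := rfl
  right_inv _ := rfl
  map_mul' _ _ :=
    Prod.ext (Matrix.map_mul (f := RingHom.fst R S)) (Matrix.map_mul (f := RingHom.snd R S))
  map_add' _ _ := rfl

theorem det_eq_prod_mk [DecidableEq ι] (M : Matrix ι ι (R × S)) :
    M.det = ((M.map Prod.fst).det, (M.map Prod.snd).det) :=
  Prod.ext ((RingHom.fst R S).map_det M) ((RingHom.snd R S).map_det M)

theorem fst_comp_mulVec (M : Matrix ι ι (R × S)) (z : ι → R × S) :
    Prod.fst ∘ (M *ᵥ z) = M.map Prod.fst *ᵥ (Prod.fst ∘ z) :=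
  funext <| (RingHom.fst R S).map_mulVec M z

theorem snd_comp_mulVec (M : Matrix ι ι (R × S)) (z : ι → R × S) :
    Prod.snd ∘ (M *ᵥ z) = M.map Prod.snd *ᵥ (Prod.snd ∘ z) :=
  funext <| (RingHom.snd R S).map_mulVec M z

end Prod

def mulVecGraph (T : Matrix ι ι R) : Set (ι → R × R) :=
  {z | Prod.snd ∘ z = T *ᵥ (Prod.fst ∘ z)}

theorem prod_mem_mulVecGraph (T : Matrix ι ι R) (v : ι → R) :
    Function.prod v (T *ᵥ v) ∈ mulVecGraph T := rfl

section DecidableEq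

variable [DecidableEq ι]

theorem transpose_mul_self_eq_one_iff_conj {B : Matrix ι ι R} (hB : IsUnit B)
    (A : Matrix ι ι R) :
    Aᵀ * A = 1 ↔ (B⁻¹ * A * B)ᵀ * (Bᵀ * B) * (B⁻¹ * A * B) = Bᵀ * B := by
  have hB' : IsUnit B.det := (isUnit_iff_isUnit_det B).mp hB
  have hBt : IsUnit Bᵀ := (isUnit_transpose B).mpr hB
  have hBt' : IsUnit Bᵀ.det := (isUnit_iff_isUnit_det _).mp hBt
  have key : (B⁻¹ * A * B)ᵀ * (Bᵀ * B) * (B⁻¹ * A * B) = Bᵀ * (Aᵀ * A) * B := by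
    simp only [transpose_mul, transpose_nonsing_inv, mul_assoc,
      nonsing_inv_mul_cancel_left _ _ hBt', mul_nonsing_inv_cancel_left _ _ hB']
  rw [key]
  constructor
  · intro h
    rw [h, mul_one]
  · intro h
    exact hBt.mul_left_cancel (hB.mul_right_cancel (by rw [h, mul_one]))

theorem image_conj_specialOrthogonal {B : Matrix ι ι R} (hB : IsUnit B) :
    (fun A => B⁻¹ * A * B) '' {A | Aᵀ * A = 1 ∧ A.det = 1} =
      {P | Pᵀ * (Bᵀ * B) * P = Bᵀ * B ∧ P.det = 1} := by
  have hB' : IsUnit B.det := (isUnit_iff_isUnit_det B).mp hB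
  ext P
  constructor
  · rintro ⟨A, ⟨hA, hdet⟩, rfl⟩
    exact ⟨(transpose_mul_self_eq_one_iff_conj hB A).mp hA, by rwa [det_conj' hB]⟩
  · rintro ⟨hP, hdet⟩
    have hP' : B⁻¹ * (B * P * B⁻¹) * B = P := by
      simp only [mul_assoc, nonsing_inv_mul_cancel_left _ _ hB', nonsing_inv_mul _ hB', mul_one]
    refine ⟨B * P * B⁻¹, ⟨?_, by rwa [det_conj hB]⟩, hP'⟩
    rwa [transpose_mul_self_eq_one_iff_conj hB, hP']

noncomputable def pairConj (X P : Matrix ι ι R) : Matrix ι ι (R × R) :=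
  prodRingEquiv.symm (P, X * P * X⁻¹)

theorem pairConj_map_fst (X P : Matrix ι ι R) : (pairConj X P).map Prod.fst = P := rfl

theorem pairConj_map_snd (X P : Matrix ι ι R) :
    (pairConj X P).map Prod.snd = X * P * X⁻¹ := rfl

theorem pairConj_mul {X : Matrix ι ι R} (hX : IsUnit X) (P P' : Matrix ι ι R) :
    pairConj X (P * P') = pairConj X P * pairConj X P' := by
  have hX' : IsUnit X.det := (isUnit_iff_isUnit_det X).mp hX
  rw [pairConj, pairConj, pairConj, ← map_mul, Prod.mk_mul_mk]
  simp only [mul_assoc, nonsing_inv_mul_cancel_left _ _ hX']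

theorem pairConj_injective (X : Matrix ι ι R) : Function.Injective (pairConj X) :=
  fun _ _ h => congrArg Prod.fst (prodRingEquiv.symm.injective h)

theorem transpose_mul_mul_eq_and_commute_iff {Q S : Matrix ι ι R} (hQ : IsUnit Q)
    (hS : IsUnit S) (P₁ P₂ : Matrix ι ι R) :
    P₁ᵀ * Q * P₂ = Q ∧ P₂ * (Q⁻¹ * S) = Q⁻¹ * S * P₁ ↔
      P₁ᵀ * S * P₁ = S ∧ P₂ = Q⁻¹ * S * P₁ * (Q⁻¹ * S)⁻¹ := by
  set X := Q⁻¹ * S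
  have hX : IsUnit X.det :=
    (isUnit_iff_isUnit_det X).mp ((isUnit_nonsing_inv_iff.mpr hQ).mul hS)
  have hQX : Q * X = S := mul_nonsing_inv_cancel_left _ _ ((isUnit_iff_isUnit_det Q).mp hQ)
  have hcomm : P₂ * X = X * P₁ ↔ P₂ = X * P₁ * X⁻¹ :=
    ⟨fun h => by rw [← h, mul_nonsing_inv_cancel_right _ _ hX],
     fun h => by rw [h, nonsing_inv_mul_cancel_right _ _ hX]⟩
  have hform : P₁ᵀ * Q * (X * P₁ * X⁻¹) = P₁ᵀ * S * P₁ * X⁻¹ := by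
    rw [← hQX]; simp only [mul_assoc]
  rw [hcomm]
  constructor
  · rintro ⟨h, rfl⟩
    refine ⟨?_, rfl⟩
    rw [hform] at h
    calc P₁ᵀ * S * P₁ = P₁ᵀ * S * P₁ * X⁻¹ * X :=
          (nonsing_inv_mul_cancel_right _ _ hX).symm
      _ = S := by rw [h, hQX]
  · rintro ⟨h, rfl⟩
    refine ⟨?_, rfl⟩
    rw [hform, h, ← hQX, mul_nonsing_inv_cancel_right _ _ hX]

theorem image_mulVec_mulVecGraph_iff {T : Matrix ι ι R} (M : Matrix ι ι (R × R))
    (hM : IsUnit (M.map Prod.fst)) :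
    (M *ᵥ ·) '' mulVecGraph T = mulVecGraph T ↔ M.map Prod.snd * T = T * M.map Prod.fst := by
  have hmaps : ∀ z ∈ mulVecGraph T,
      Prod.snd ∘ (M *ᵥ z) = (M.map Prod.snd * T) *ᵥ (Prod.fst ∘ z) := by
    intro z hz
    rw [snd_comp_mulVec, ← mulVec_mulVec, ← hz.out]
  constructor
  · intro h
    refine ext_of_mulVec_single fun i => ?_
    have hz := prod_mem_mulVecGraph T (Pi.single i 1)
    have hMz : M *ᵥ _ ∈ mulVecGraph T := h ▸ Set.mem_image_of_mem _ hz
    have := (hmaps _ hz).symm.trans hMz.out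
    rwa [fst_comp_mulVec, Function.fst_comp_prod, mulVec_mulVec] at this
  · intro h
    have hM' : IsUnit (M.map Prod.fst).det := (isUnit_iff_isUnit_det _).mp hM
    apply Set.Subset.antisymm
    · rintro _ ⟨z, hz, rfl⟩
      show _ = _
      rw [hmaps z hz, h, fst_comp_mulVec, mulVec_mulVec]
    · intro z hz
      set v := (M.map Prod.fst)⁻¹ *ᵥ (Prod.fst ∘ z)
      have hv : M.map Prod.fst *ᵥ v = Prod.fst ∘ z := by
        rw [mulVec_mulVec, mul_nonsing_inv _ hM', one_mulVec]
      refine ⟨Function.prod v (T *ᵥ v), prod_mem_mulVecGraph T v, ?_⟩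
      rw [Function.prod_ext_iff, fst_comp_mulVec, hmaps _ (prod_mem_mulVecGraph T v),
        Function.fst_comp_prod, h, ← mulVec_mulVec, hv]
      exact ⟨rfl, hz.symm⟩

end DecidableEq

open scoped MatrixOrder in
theorem PosDef.exists_isUnit_eq_transpose_mul [DecidableEq ι] {S : Matrix ι ι ℝ}
    (hS : S.PosDef) : ∃ B, IsUnit B ∧ S = Bᵀ * B := by
  obtain ⟨B, hB⟩ := CStarAlgebra.nonneg_iff_eq_star_mul_self.mp hS.posSemidef.nonneg
  exact ⟨B, isUnit_of_mul_isUnit_right (hB ▸ hS.isUnit), hB⟩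

end Matrix

theorem Submodule.exists_eq_mulVecGraph {ι K : Type*} [Fintype ι] [DecidableEq ι] [Field K]
    {W : Submodule K (ι → K × K)} (hW : Module.finrank K W = Fintype.card ι)
    (hfst : ∀ z ∈ W, Prod.fst ∘ z = 0 → z = 0) :
    ∃ T : Matrix ι ι K, (W : Set (ι → K × K)) = Matrix.mulVecGraph T := by
  let π₁ : W →ₗ[K] ι → K := (LinearMap.fst K K K).compLeft ι ∘ₗ W.subtype
  have hinj : Function.Injective π₁ :=
    (injective_iff_map_eq_zero π₁).mpr fun z hz => Subtype.ext (hfst z z.2 hz)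
  let e := π₁.linearEquivOfInjective hinj (by rw [hW, Module.finrank_fintype_fun_eq_card])
  let π₂ : W →ₗ[K] ι → K := (LinearMap.snd K K K).compLeft ι ∘ₗ W.subtype
  refine ⟨LinearMap.toMatrix' (π₂ ∘ₗ e.symm), ?_⟩
  ext z
  rw [Matrix.mulVecGraph, Set.mem_ofPred_eq, LinearMap.toMatrix'_mulVec]
  constructor
  · intro hz
    have : e.symm (Prod.fst ∘ z) = ⟨z, hz⟩ := e.symm_apply_eq.mpr rfl
    simp only [LinearMap.comp_apply, LinearEquiv.coe_coe, this]
    rfl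
  · intro h
    have : (e.symm (Prod.fst ∘ z) : ι → K × K) = z :=
      Function.prod_ext_iff.mpr
        ⟨(π₁.linearEquivOfInjective_apply hinj _ _).symm.trans (e.apply_symm_apply _),
          h.symm⟩
    exact this ▸ (e.symm _).2

section Para

variable {n : ℕ}

theorem Qmat_apply (i j : Fin n) : Qmat n i j = if Fin.rev i = j then 1 else 0 := by
  simp only [Qmat, of_apply, Fin.ext_iff, Fin.val_rev]
  congr 1
  simp only [eq_iff_iff]
  omega

theorem Qmat_transpose : (Qmat n)ᵀ = Qmat n := by
  ext i j
  rw [transpose_apply, Qmat_apply, Qmat_apply]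
  exact if_congr (Fin.rev_eq_iff.trans eq_comm) rfl rfl

theorem Qmat_mul_self : Qmat n * Qmat n = 1 := by
  ext i j
  simp only [mul_apply, Qmat_apply, ite_mul, one_mul, zero_mul, Finset.sum_ite_eq,
    Finset.mem_univ, if_true, Fin.rev_rev, one_apply]

theorem isUnit_Qmat : IsUnit (Qmat n) := .of_mul_eq_one_right _ Qmat_mul_self

theorem paraq_eq (z z' : Fin n → ℝ × ℝ) :
    paraq n z z' = ((Prod.fst ∘ z) ⬝ᵥ Qmat n *ᵥ (Prod.snd ∘ z'),
      (Prod.snd ∘ z) ⬝ᵥ Qmat n *ᵥ (Prod.fst ∘ z')) := rfl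

theorem paraq_mulVec_mulVec (M : Matrix (Fin n) (Fin n) (ℝ × ℝ))
    (z z' : Fin n → ℝ × ℝ) :
    paraq n (M *ᵥ z) (M *ᵥ z') =
      ((Prod.fst ∘ z) ⬝ᵥ ((M.map Prod.fst)ᵀ * Qmat n * M.map Prod.snd) *ᵥ (Prod.snd ∘ z'),
        (Prod.snd ∘ z) ⬝ᵥ
          ((M.map Prod.snd)ᵀ * Qmat n * M.map Prod.fst) *ᵥ (Prod.fst ∘ z')) := by
  simp only [paraq_eq, fst_comp_mulVec, snd_comp_mulVec, mulVec_dotProduct_mulVec,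
    ← mulVec_mulVec]

theorem paraq_mulVec_mulVec_iff (M : Matrix (Fin n) (Fin n) (ℝ × ℝ)) :
    (∀ z z', paraq n (M *ᵥ z) (M *ᵥ z') = paraq n z z') ↔
      (M.map Prod.fst)ᵀ * Qmat n * M.map Prod.snd = Qmat n := by
  constructor
  · intro h
    refine ext_of_dotProduct_mulVec fun v w => ?_
    have := congrArg Prod.fst (h (Function.prod v 0) (Function.prod 0 w))
    rw [paraq_mulVec_mulVec] at this
    simpa only [paraq_eq, Function.fst_comp_prod, Function.snd_comp_prod] using this
  · intro h z z'
    have h' : (M.map Prod.snd)ᵀ * Qmat n * M.map Prod.fst = Qmat n := by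
      simpa only [transpose_mul, transpose_transpose, Qmat_transpose, mul_assoc] using
        congrArg transpose h
    rw [paraq_mulVec_mulVec, h, h', paraq_eq]

theorem paraq_prod_mulVec (T : Matrix (Fin n) (Fin n) ℝ) (v w : Fin n → ℝ) :
    paraq n (Function.prod v (T *ᵥ v)) (Function.prod w (T *ᵥ w)) =
      (v ⬝ᵥ (Qmat n * T) *ᵥ w, w ⬝ᵥ (Qmat n * T) *ᵥ v) := by
  rw [paraq_eq, Function.fst_comp_prod, Function.snd_comp_prod, Function.fst_comp_prod,
    Function.snd_comp_prod, mulVec_mulVec, dotProduct_comm (T *ᵥ v), mulVec_dotProduct_mulVec,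
    Qmat_transpose]

theorem IsAdmissible.exists_posDef_eq_mulVecGraph {W : Submodule ℝ (Fin n → ℝ × ℝ)}
    (hW : IsAdmissible n W) :
    ∃ S : Matrix (Fin n) (Fin n) ℝ, S.PosDef ∧
      (W : Set (Fin n → ℝ × ℝ)) = mulVecGraph (-(Qmat n * S)) := by
  obtain ⟨hrank, hIm, hRe⟩ := hW
  obtain ⟨T, hT⟩ : ∃ T, (W : Set (Fin n → ℝ × ℝ)) = mulVecGraph T := by
    refine Submodule.exists_eq_mulVecGraph (by rw [hrank, Fintype.card_fin]) fun z hz h0 => ?_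
    by_contra hne
    have := hRe z hz hne
    simp [Retau, paraq_eq, h0] at this
  have hgraph (v) : Function.prod v (T *ᵥ v) ∈ W := by
    rw [← SetLike.mem_coe, hT]
    exact prod_mem_mulVecGraph T v
  have hsymm : (Qmat n * T)ᵀ = Qmat n * T := transpose_eq_of_dotProduct_mulVec_comm fun v w => by
    have := hIm _ (hgraph v) _ (hgraph w)
    rw [Imtau, paraq_prod_mulVec] at this
    linarith
  refine ⟨-(Qmat n * T), ?_, by rwa [mul_neg, ← mul_assoc, Qmat_mul_self, one_mul, neg_neg]⟩
  refine PosDef.of_dotProduct_mulVec_pos ?_ fun v hv => ?_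
  · rw [IsHermitian, conjTranspose_eq_transpose_of_trivial, transpose_neg, hsymm]
  · have hne : Function.prod v (T *ᵥ v) ≠ 0 := fun h => hv (congrArg (Prod.fst ∘ ·) h)
    have := hRe _ (hgraph v) hne
    rw [Retau, paraq_prod_mulVec] at this
    rw [star_trivial, neg_mulVec, dotProduct_neg]
    linarith

theorem stabilizer_conditions_iff_exists_pairConj {S : Matrix (Fin n) (Fin n) ℝ} (hS : IsUnit S)
    (M : Matrix (Fin n) (Fin n) (ℝ × ℝ)) :
    (IsUnit M ∧ (∀ z z', paraq n (M *ᵥ z) (M *ᵥ z') = paraq n z z') ∧ M.det = (1, 1) ∧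
        (M *ᵥ ·) '' mulVecGraph (-(Qmat n * S)) = mulVecGraph (-(Qmat n * S))) ↔
      ∃ P, (Pᵀ * S * P = S ∧ P.det = 1) ∧ pairConj (Qmat n * S) P = M := by
  have hX : IsUnit (Qmat n * S) := isUnit_Qmat.mul hS
  have key := inv_eq_left_inv (Qmat_mul_self (n := n)) ▸
    transpose_mul_mul_eq_and_commute_iff isUnit_Qmat hS
  have hgraph {M : Matrix (Fin n) (Fin n) (ℝ × ℝ)} (hM : IsUnit (M.map Prod.fst)) :
      (M *ᵥ ·) '' mulVecGraph (-(Qmat n * S)) = mulVecGraph (-(Qmat n * S)) ↔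
        M.map Prod.snd * (Qmat n * S) = Qmat n * S * M.map Prod.fst := by
    rw [image_mulVec_mulVecGraph_iff M hM, mul_neg, neg_mul, neg_inj]
  constructor
  · rintro ⟨-, hq, hdet, himg⟩
    rw [det_eq_prod_mk, Prod.mk.injEq] at hdet
    have hM : IsUnit (M.map Prod.fst) := (isUnit_iff_isUnit_det _).mpr (hdet.1 ▸ isUnit_one)
    obtain ⟨hP, hM₂⟩ :=
      (key _ _).mp ⟨(paraq_mulVec_mulVec_iff M).mp hq, (hgraph hM).mp himg⟩
    exact ⟨M.map Prod.fst, ⟨hP, hdet.1⟩, by rw [pairConj, ← hM₂]; rfl⟩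
  · rintro ⟨P, ⟨hP, hdet⟩, rfl⟩
    have hdet' : (pairConj (Qmat n * S) P).det = (1, 1) := by
      rw [det_eq_prod_mk, pairConj_map_fst, pairConj_map_snd, det_conj hX, hdet]
    obtain ⟨hq, himg⟩ := (key _ _).mpr ⟨hP, pairConj_map_snd _ _⟩
    refine ⟨(isUnit_iff_isUnit_det _).mpr (hdet' ▸ isUnit_one),
      (paraq_mulVec_mulVec_iff _).mpr hq, hdet', (hgraph ?_).mpr himg⟩
    rw [pairConj_map_fst]
    exact (isUnit_iff_isUnit_det _).mpr (hdet ▸ isUnit_one)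

end Para

theorem stabilizer_iso_specialOrthogonal_general (m : ℕ)
    (W : Submodule ℝ (Fin (2 * m + 1) → ℝ × ℝ)) (hW : IsAdmissible (2 * m + 1) W) :
    letI SO : Set (Matrix (Fin (2 * m + 1)) (Fin (2 * m + 1)) ℝ) :=
      {A | Aᵀ * A = 1 ∧ A.det = 1}
    letI Stab : Set (Matrix (Fin (2 * m + 1)) (Fin (2 * m + 1)) (ℝ × ℝ)) :=
      {M | IsUnit M ∧
        (∀ z z' : Fin (2 * m + 1) → ℝ × ℝ,
          paraq (2 * m + 1) (M.mulVec z) (M.mulVec z') = paraq (2 * m + 1) z z') ∧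
        M.det = (1, 1) ∧
        (fun z => M.mulVec z) '' (W : Set (Fin (2 * m + 1) → ℝ × ℝ)) =
          (W : Set (Fin (2 * m + 1) → ℝ × ℝ))}
    ∃ f : Matrix (Fin (2 * m + 1)) (Fin (2 * m + 1)) ℝ →
        Matrix (Fin (2 * m + 1)) (Fin (2 * m + 1)) (ℝ × ℝ),
      Set.InjOn f SO ∧ f '' SO = Stab ∧
      ∀ A ∈ SO, ∀ B ∈ SO, f (A * B) = f A * f B := by
  obtain ⟨S, hS, hWS⟩ := hW.exists_posDef_eq_mulVecGraph
  obtain ⟨B, hB, hSB⟩ := hS.exists_isUnit_eq_transpose_mul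
  have hB' : IsUnit B.det := (isUnit_iff_isUnit_det B).mp hB
  have hX : IsUnit (Qmat _ * S) := isUnit_Qmat.mul hS.isUnit
  refine ⟨fun A => pairConj (Qmat _ * S) (B⁻¹ * A * B), fun A _ A' _ h => ?_, ?_,
    fun A _ A' _ => ?_⟩
  · have h := pairConj_injective _ h
    exact (isUnit_nonsing_inv_iff.mpr hB).mul_left_cancel (hB.mul_right_cancel h)
  · rw [← Set.image_image (pairConj _) (fun A => B⁻¹ * A * B),
      image_conj_specialOrthogonal hB, ← hSB]
    ext M
    simp only [hWS, Set.mem_image, Set.mem_ofPred_eq]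
    exact (stabilizer_conditions_iff_exists_pairConj hS.isUnit M).symm
  · rw [← pairConj_mul hX]
    simp only [mul_assoc, mul_nonsing_inv_cancel_left _ _ hB']

/-- The stabilizer in `SU(2m+1, ℝ_τ, Q)` of a totally geodesic Lagrangian negative
definite subspace `W` of `ℝ_τ^{2m+1}` is isomorphic as a group to the special orthogonal
group `SO(2m+1)`: there is a multiplication-preserving bijection from
`{A : AᵀA = 1, det A = 1}` onto the stabilizer of `W`. -/
theorem stabilizer_iso_specialOrthogonal (m : ℕ) (hm : 1 ≤ m)
    (W : Submodule ℝ (Fin (2 * m + 1) → ℝ × ℝ)) (hW : IsAdmissible (2 * m + 1) W) :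
    letI SO : Set (Matrix (Fin (2 * m + 1)) (Fin (2 * m + 1)) ℝ) :=
      {A | Aᵀ * A = 1 ∧ A.det = 1}
    letI Stab : Set (Matrix (Fin (2 * m + 1)) (Fin (2 * m + 1)) (ℝ × ℝ)) :=
      {M | IsUnit M ∧
        (∀ z z' : Fin (2 * m + 1) → ℝ × ℝ,
          paraq (2 * m + 1) (M.mulVec z) (M.mulVec z') = paraq (2 * m + 1) z z') ∧
        M.det = (1, 1) ∧
        (fun z => M.mulVec z) '' (W : Set (Fin (2 * m + 1) → ℝ × ℝ)) =
          (W : Set (Fin (2 * m + 1) → ℝ × ℝ))}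
    ∃ f : Matrix (Fin (2 * m + 1)) (Fin (2 * m + 1)) ℝ →
        Matrix (Fin (2 * m + 1)) (Fin (2 * m + 1)) (ℝ × ℝ),
      Set.InjOn f SO ∧ f '' SO = Stab ∧
      ∀ A ∈ SO, ∀ B ∈ SO, f (A * B) = f A * f B :=
  stabilizer_iso_specialOrthogonal_general m W hW
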